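/- Let k be a natural number and let G be a finite simple graph whose vertex set is partitioned into k sets A1, …, Ak, each of which is a clique of G (that is, G is the complement of a k-partite graph). If G has a triangle partition, then G has a triangle partition P in which the number of triangles not entirely contained in a single one of the classes A1, …, Ak is at most 14·k³. -/

import Mathlib

/-- A triangle in a simple graph: a set of three pairwise adjacent vertices. -/
def IsTriangle {V : Type*} (G : SimpleGraph V) (T : Finset V) : Prop :=
  T.card = 3 ∧ (T : Set V).Pairwise G.Adj

/-- A triangle packing: a collection of pairwise vertex-disjoint triangles. -/
def IsTrianglePacking {V : Type*} (G : SimpleGraph V) (P : Finset (Finset V)) : Prop :=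
  (∀ T ∈ P, IsTriangle G T) ∧
    (P : Set (Finset V)).Pairwise fun S T => Disjoint S T

/-- A triangle partition: a triangle packing covering every vertex. -/
def IsTrianglePartition {V : Type*} (G : SimpleGraph V) (P : Finset (Finset V)) : Prop :=
  IsTrianglePacking G P ∧ ∀ v : V, ∃ T ∈ P, v ∈ T

/-! Take a triangle partition with the fewest non-monochromatic triangles. The colour type of a
triangle, the multiset of the classes of its vertices, takes at most `k³` values, so if there were
more than `2k³` non-monochromatic triangles, three of them would share a type. Their union then
meets every class in a multiple of three vertices, and since the classes are cliques it splits
into monochromatic triangles; swapping these in lowers the count. -/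

section TrianglePartition

open Finset

variable {V ι : Type*}

def IsMonochromatic (c : V → ι) (T : Finset V) : Prop :=
  ∀ u ∈ T, ∀ v ∈ T, c u = c v

instance [DecidableEq ι] (c : V → ι) : DecidablePred (IsMonochromatic c) :=
  fun T => inferInstanceAs (Decidable (∀ u ∈ T, ∀ v ∈ T, c u = c v))

lemma isTriangle_of_isMonochromatic {G : SimpleGraph V} {c : V → ι}
    (hc : ∀ ⦃u v⦄, u ≠ v → c u = c v → G.Adj u v) {T : Finset V} (hT : #T = 3)
    (hmono : IsMonochromatic c T) : IsTriangle G T :=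
  ⟨hT, fun u hu v hv huv => hc huv (hmono u hu v hv)⟩

lemma IsTrianglePartition.sdiff_union [DecidableEq V] {G : SimpleGraph V}
    {P R : Finset (Finset V)} (hP : IsTrianglePartition G P) (hRP : R ⊆ P)
    (Q : Finpartition (R.biUnion id)) (hQ : ∀ T ∈ Q.parts, IsTriangle G T) :
    IsTrianglePartition G (P \ R ∪ Q.parts) := by
  obtain ⟨⟨hPtri, hPdisj⟩, hPcover⟩ := hP
  refine ⟨⟨fun T hT => ?_, ?_⟩, fun v => ?_⟩
  · rcases mem_union.1 hT with hT | hT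
    exacts [hPtri T (mem_sdiff.1 hT).1, hQ T hT]
  · rw [coe_union]
    refine Set.pairwiseDisjoint_union.2 ⟨hPdisj.mono (by simp), Q.disjoint, ?_⟩
    intro T hT T' hT' _
    obtain ⟨hTP, hTR⟩ := mem_sdiff.1 hT
    refine Disjoint.mono_right (Q.le hT') ((disjoint_biUnion_right _ _ _).2 fun S hS => ?_)
    exact hPdisj hTP (hRP hS) (ne_of_mem_of_not_mem hS hTR).symm
  · obtain ⟨T, hTP, hvT⟩ := hPcover v
    by_cases hTR : T ∈ R
    · have hvQ : v ∈ Q.parts.biUnion id := by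
        rw [Q.biUnion_parts]; exact mem_biUnion.2 ⟨T, hTR, hvT⟩
      obtain ⟨T', hT', hvT'⟩ := mem_biUnion.1 hvQ
      exact ⟨T', mem_union_right _ hT', hvT'⟩
    · exact ⟨T, mem_union_left _ (mem_sdiff.2 ⟨hTP, hTR⟩), hvT⟩

section Colouring

variable [DecidableEq ι] (c : V → ι)

lemma card_filter_eq_count_map (T : Finset V) (i : ι) :
    #{v ∈ T | c v = i} = (T.val.map c).count i := by
  rw [Multiset.count_map, card_def, filter_val]
  exact congrArg _ (Multiset.filter_congr fun _ _ => eq_comm)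

lemma card_filter_biUnion_eq_mul_count [DecidableEq V] {R : Finset (Finset V)}
    (hR : (R : Set (Finset V)).PairwiseDisjoint id) {m : Multiset ι}
    (hm : ∀ T ∈ R, T.val.map c = m) (i : ι) :
    #{v ∈ R.biUnion id | c v = i} = #R * m.count i := by
  rw [filter_biUnion, card_biUnion (hR.mono_on fun _ _ => filter_subset _ _)]
  rw [sum_congr rfl fun T hT => by rw [id, card_filter_eq_count_map, hm T hT], sum_const,
    smul_eq_mul]

lemma exists_finpartition_isMonochromatic_of_three_dvd [DecidableEq V] (s : Finset V)
    (hs : ∀ i, 3 ∣ #{v ∈ s | c v = i}) :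
    ∃ Q : Finpartition s, ∀ t ∈ Q.parts, #t = 3 ∧ IsMonochromatic c t := by
  induction s using Finset.strongInduction with
  | H s ih =>
  obtain rfl | ⟨v, hv⟩ := s.eq_empty_or_nonempty
  · exact ⟨Finpartition.empty _, by simp⟩
  obtain ⟨t, hts, ht⟩ : ∃ t ⊆ {w ∈ s | c w = c v}, #t = 3 :=
    exists_subset_card_eq <|
      Nat.le_of_dvd (card_pos.2 ⟨v, mem_filter.2 ⟨hv, rfl⟩⟩) (hs (c v))
  have hcol : ∀ w ∈ t, c w = c v := fun w hw => (mem_filter.1 (hts hw)).2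
  have hts' : t ⊆ s := hts.trans (filter_subset _ _)
  have htne : t.Nonempty := card_pos.1 (by omega)
  have hrest : ∀ i, 3 ∣ #{w ∈ s \ t | c w = i} := by
    intro i
    have hsplit : #{w ∈ s | c w = i} = #{w ∈ s \ t | c w = i} + #{w ∈ t | c w = i} := by
      rw [← card_union_of_disjoint (disjoint_filter_filter sdiff_disjoint), ← filter_union,
        sdiff_union_of_subset hts']
    have ht3 : 3 ∣ #{w ∈ t | c w = i} := by
      by_cases h : c v = i
      · rw [filter_true_of_mem fun w hw => (hcol w hw).trans h, ht]
      · rw [filter_false_of_mem fun w hw => (hcol w hw).trans_ne h, card_empty]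
        exact dvd_zero 3
    exact (Nat.dvd_add_left ht3).1 (hsplit ▸ hs i)
  obtain ⟨Q, hQ⟩ := ih (s \ t) (sdiff_ssubset hts' htne) hrest
  refine ⟨Q.extend htne.ne_empty sdiff_disjoint (sdiff_union_of_subset hts'), fun u hu => ?_⟩
  rw [Finpartition.extend_parts, mem_insert] at hu
  rcases hu with rfl | hu
  · exact ⟨ht, fun a ha b hb => (hcol a ha).trans (hcol b hb).symm⟩
  · exact hQ u hu

lemma exists_subset_card_three_map_eq [Fintype ι] (S : Finset (Finset V))
    (hS : ∀ T ∈ S, #T = 3) (hlt : 2 * Fintype.card ι ^ 3 < #S) :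
    ∃ R ⊆ S, #R = 3 ∧ ∃ m : Multiset ι, ∀ T ∈ R, T.val.map c = m := by
  set types : Finset (Multiset ι) :=
    (univ : Finset (ι × ι × ι)).image fun p => {p.1, p.2.1, p.2.2}
  have hmaps : ∀ T ∈ S, T.val.map c ∈ types := by
    intro T hT
    obtain ⟨a, b, d, h⟩ := (Multiset.card_eq_three (s := T.val.map c)).1
      (by rw [Multiset.card_map]; exact hS T hT)
    exact mem_image.2 ⟨(a, b, d), mem_univ _, h.symm⟩
  have htypes : #types ≤ Fintype.card ι ^ 3 :=
    card_image_le.trans (by simp [pow_three])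
  obtain ⟨m, -, hm⟩ := exists_lt_card_fiber_of_mul_lt_card_of_maps_to hmaps
    (n := 2) (by linarith)
  obtain ⟨R, hR, hR3⟩ := exists_subset_card_eq (show 3 ≤ _ from hm)
  exact ⟨R, hR.trans (filter_subset _ _), hR3, m, fun T hT => (mem_filter.1 (hR hT)).2⟩

variable [DecidableEq V] [Fintype ι] {G : SimpleGraph V} {c}

lemma IsTrianglePartition.exists_card_filter_not_isMonochromatic_lt
    (hc : ∀ ⦃u v⦄, u ≠ v → c u = c v → G.Adj u v) {P : Finset (Finset V)}
    (hP : IsTrianglePartition G P)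
    (hlt : 2 * Fintype.card ι ^ 3 < #{T ∈ P | ¬IsMonochromatic c T}) :
    ∃ P', IsTrianglePartition G P' ∧
      #{T ∈ P' | ¬IsMonochromatic c T} < #{T ∈ P | ¬IsMonochromatic c T} := by
  set S := {T ∈ P | ¬IsMonochromatic c T}
  obtain ⟨R, hRS, hR3, m, hm⟩ :=
    exists_subset_card_three_map_eq c S (fun T hT => (hP.1.1 T (mem_filter.1 hT).1).1) hlt
  have hRP : R ⊆ P := hRS.trans (filter_subset _ _)
  have hdvd : ∀ i, 3 ∣ #{v ∈ R.biUnion id | c v = i} := fun i => by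
    rw [card_filter_biUnion_eq_mul_count c (hP.1.2.mono hRP) hm, hR3]
    exact dvd_mul_right 3 _
  obtain ⟨Q, hQ⟩ := exists_finpartition_isMonochromatic_of_three_dvd c _ hdvd
  refine ⟨P \ R ∪ Q.parts, hP.sdiff_union hRP Q fun T hT =>
    isTriangle_of_isMonochromatic hc (hQ T hT).1 (hQ T hT).2, ?_⟩
  calc #{T ∈ P \ R ∪ Q.parts | ¬IsMonochromatic c T} ≤ #(S \ R) := by
        refine card_le_card fun T hT => ?_
        obtain ⟨hT, hcross⟩ := mem_filter.1 hT
        rcases mem_union.1 hT with hT | hT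
        · exact mem_sdiff.2 ⟨mem_filter.2 ⟨(mem_sdiff.1 hT).1, hcross⟩, (mem_sdiff.1 hT).2⟩
        · exact absurd (hQ T hT).2 hcross
    _ < #S := card_lt_card (sdiff_ssubset hRS (card_pos.1 (by omega)))

theorem exists_isTrianglePartition_card_filter_not_isMonochromatic_le
    (hc : ∀ ⦃u v⦄, u ≠ v → c u = c v → G.Adj u v) {P₀ : Finset (Finset V)}
    (hP₀ : IsTrianglePartition G P₀) :
    ∃ P, IsTrianglePartition G P ∧
      #{T ∈ P | ¬IsMonochromatic c T} ≤ 2 * Fintype.card ι ^ 3 := by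
  let crossCount (P : Finset (Finset V)) : ℕ := #{T ∈ P | ¬IsMonochromatic c T}
  let P := Function.argminOn crossCount {P | IsTrianglePartition G P} ⟨P₀, hP₀⟩
  have hP : IsTrianglePartition G P :=
    Function.argminOn_mem crossCount {P | IsTrianglePartition G P} _
  refine ⟨P, hP, not_lt.1 fun hlt => ?_⟩
  obtain ⟨P', hP', hlt'⟩ := hP.exists_card_filter_not_isMonochromatic_lt hc hlt
  exact Function.not_lt_argminOn crossCount _ hP' hlt'

end Colouring

end TrianglePartition

theorem stmt15_general {V : Type*} (k : ℕ) (G : SimpleGraph V) (A : Fin k → Set V)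
    (hunion : (⋃ i, A i) = Set.univ)
    (hclique : ∀ i, G.IsClique (A i))
    (hpart : ∃ P : Finset (Finset V), IsTrianglePartition G P) :
    ∃ P : Finset (Finset V), IsTrianglePartition G P ∧
      {T | T ∈ P ∧ ¬∃ i : Fin k, (T : Set V) ⊆ A i}.ncard ≤ 14 * k ^ 3 := by
  classical
  obtain ⟨P₀, hP₀⟩ := hpart
  choose cl hcl using fun v => Set.mem_iUnion.1 (hunion ▸ Set.mem_univ v)
  have hc : ∀ ⦃u v⦄, u ≠ v → cl u = cl v → G.Adj u v :=
    fun u v huv h => hclique (cl v) (h ▸ hcl u) (hcl v) huv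
  obtain ⟨P, hP, hbound⟩ :=
    exists_isTrianglePartition_card_filter_not_isMonochromatic_le hc hP₀
  refine ⟨P, hP, ?_⟩
  have hsub : {T | T ∈ P ∧ ¬∃ i, (T : Set V) ⊆ A i} ⊆
      ↑(P.filter fun T => ¬IsMonochromatic cl T) := by
    rintro T ⟨hT, hnotsub⟩
    refine Finset.mem_filter.2 ⟨hT, fun hmono => hnotsub ?_⟩
    obtain ⟨v, hv⟩ := Finset.card_pos.1 (by rw [(hP.1.1 T hT).1]; norm_num)
    exact ⟨cl v, fun u hu => hmono u hu v hv ▸ hcl u⟩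
  calc _ ≤ (P.filter fun T => ¬IsMonochromatic cl T).card := by
        rw [← Set.ncard_coe_finset]; exact Set.ncard_le_ncard hsub
    _ ≤ 2 * k ^ 3 := by simpa using hbound
    _ ≤ 14 * k ^ 3 := by omega

/-- Let `G` be the complement of a `k`-partite graph: its vertex set is
partitioned into `k` cliques `A 0, …, A (k-1)`. If `G` has a triangle partition, then it
has a triangle partition `P` in which the number of triangles not entirely contained in
a single class is at most `14 · k³`. -/
theorem stmt15 {V : Type*} [Fintype V] (k : ℕ) (G : SimpleGraph V) (A : Fin k → Set V)
    (hdisj : ∀ i j, i ≠ j → Disjoint (A i) (A j))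
    (hunion : (⋃ i, A i) = Set.univ)
    (hclique : ∀ i, G.IsClique (A i))
    (hpart : ∃ P : Finset (Finset V), IsTrianglePartition G P) :
    ∃ P : Finset (Finset V), IsTrianglePartition G P ∧
      {T | T ∈ P ∧ ¬∃ i : Fin k, (T : Set V) ⊆ A i}.ncard ≤ 14 * k ^ 3 :=
  stmt15_general k G A hunion hclique hpart
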